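/- Let 𝒳, 𝒴 be finite Markov chains with |X| = n, |Y| = m, let C be a cost matrix and δ ∈ [0,1]. Define matrices C^{δ,(0)} := C and C^{δ,(l+1)}_{ij} := δ C_{ij} + (1−δ) d_W(m^X_i, m^Y_j; C^{δ,(l)}). Then for every k ∈ ℕ, d_WL^{δ,(k)}(𝒳,𝒴;C) = d_W(ν^X, ν^Y; C^{δ,(k)}). -/

import Mathlib

open scoped BigOperators
open Filter Topology

/-- A probability vector on a finite type. -/
def IsProb {X : Type*} [Fintype X] (ν : X → ℝ) : Prop :=
  (∀ x, 0 ≤ ν x) ∧ ∑ x, ν x = 1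

/-- `μ` is a coupling of `α` and `β`. -/
def IsCoupling {X Y : Type*} [Fintype X] [Fintype Y]
    (μ : X × Y → ℝ) (α : X → ℝ) (β : Y → ℝ) : Prop :=
  (∀ z, 0 ≤ μ z) ∧ (∀ x, ∑ y, μ (x, y) = α x) ∧ (∀ y, ∑ x, μ (x, y) = β y)

/-- A finite Markov chain: a transition kernel together with an initial distribution. -/
structure MarkovChain (X : Type*) [Fintype X] where
  kernel : X → X → ℝ
  init : X → ℝ
  kernel_prob : ∀ x, IsProb (kernel x)
  init_prob : IsProb init

/-- A Markovian coupling between two finite Markov chains.  `trans t` is the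
transition coupling used from time `t` to time `t+1` (i.e. `m^{(t+1)}`). -/
structure MarkovCoupling {X Y : Type*} [Fintype X] [Fintype Y]
    (MX : MarkovChain X) (MY : MarkovChain Y) where
  init : X × Y → ℝ
  trans : ℕ → X × Y → X × Y → ℝ
  init_coupling : IsCoupling init MX.init MY.init
  trans_coupling : ∀ t xy, IsCoupling (trans t xy) (MX.kernel xy.1) (MY.kernel xy.2)

/-- Time-`t` law determined by an initial distribution and step kernels. -/
noncomputable def lawAux {X Y : Type*} [Fintype X] [Fintype Y]
    (ν : X × Y → ℝ) (m : ℕ → X × Y → X × Y → ℝ) : ℕ → X × Y → ℝ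
  | 0 => ν
  | t + 1 => fun z => ∑ w : X × Y, m t w z * lawAux ν m t w

/-- The time-`t` law of a Markovian coupling. -/
noncomputable def MarkovCoupling.law {X Y : Type*} [Fintype X] [Fintype Y]
    {MX : MarkovChain X} {MY : MarkovChain Y} (π : MarkovCoupling MX MY) :
    ℕ → X × Y → ℝ :=
  lawAux π.init π.trans

/-- `p` is a probability distribution on `ℕ`. -/
def IsProbNat (p : ℕ → ℝ) : Prop := (∀ t, 0 ≤ p t) ∧ HasSum p 1

/-- The Optimal Transport Markov (OTM) distance associated to `p`. -/
noncomputable def dOTM {X Y : Type*} [Fintype X] [Fintype Y] (p : ℕ → ℝ)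
    (MX : MarkovChain X) (MY : MarkovChain Y) (C : X × Y → ℝ) : ℝ :=
  ⨅ π : MarkovCoupling MX MY, ∑' t, p t * ∑ z : X × Y, C z * π.law t z

/-- The geometric distribution `p_δ^∞` on `ℕ`. -/
noncomputable def pGeom (δ : ℝ) : ℕ → ℝ := fun t => δ * (1 - δ) ^ t

/-- The truncation `p_δ^k` of the geometric distribution at `k`. -/
noncomputable def pTrunc (δ : ℝ) (k : ℕ) : ℕ → ℝ := fun t =>
  if t < k then δ * (1 - δ) ^ t else if t = k then (1 - δ) ^ k else 0

/-- The optimal transport cost between `α` and `β` with cost matrix `C`. -/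
noncomputable def dW {X Y : Type*} [Fintype X] [Fintype Y]
    (α : X → ℝ) (β : Y → ℝ) (C : X × Y → ℝ) : ℝ :=
  ⨅ μ : {μ : X × Y → ℝ // IsCoupling μ α β}, ∑ z : X × Y, C z * μ.1 z

/-- The recursively defined cost matrices `C^{δ,(l)}`. -/
noncomputable def Cmat {X Y : Type*} [Fintype X] [Fintype Y]
    (MX : MarkovChain X) (MY : MarkovChain Y) (C : X × Y → ℝ) (δ : ℝ) :
    ℕ → X × Y → ℝ
  | 0 => C
  | l + 1 => fun z =>
      δ * C z + (1 - δ) * dW (MX.kernel z.1) (MY.kernel z.2) (Cmat MX MY C δ l)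

/-!
Dynamic programming. The truncated geometric weights satisfy `p_δ^{k+1}(0) = δ` and
`p_δ^{k+1}(t+1) = (1-δ) p_δ^k(t)`, so the cost of a Markovian coupling of depth `k+1` is `δ` times
the expected initial cost plus `1-δ` times the expected depth-`k` cost of the couplings restarted
after one step. Since every transition coupling costs at least the optimal transport cost, induction
on `k` shows that `∑ z, C^{δ,(k)} z * ν z` is a lower bound for the cost of every coupling started
from `ν`. It is attained by the coupling that uses, from time `t` to `t+1`, optimal couplings for
`C^{δ,(k-1-t)}`, which exist because the set of couplings is compact.
-/

open Finset

section Coupling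

variable {X Y : Type*} [Fintype X] [Fintype Y] {α : X → ℝ} {β : Y → ℝ}

lemma IsProb.isCoupling_prod (hα : IsProb α) (hβ : IsProb β) :
    IsCoupling (fun z : X × Y => α z.1 * β z.2) α β :=
  ⟨fun z => mul_nonneg (hα.1 z.1) (hβ.1 z.2),
    fun x => by simp only [← mul_sum, hβ.2, mul_one],
    fun y => by simp only [← sum_mul, hα.2, one_mul]⟩

lemma IsCoupling.le_left {μ : X × Y → ℝ} (hμ : IsCoupling μ α β) (z : X × Y) : μ z ≤ α z.1 := by
  rw [← hμ.2.1 z.1]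
  exact single_le_sum (fun y _ => hμ.1 (z.1, y)) (mem_univ z.2)

lemma isClosed_setOf_isCoupling (α : X → ℝ) (β : Y → ℝ) :
    IsClosed {μ : X × Y → ℝ | IsCoupling μ α β} := by
  simp only [IsCoupling, Set.ofPred_and, Set.ofPred_forall]
  refine (isClosed_iInter fun z => isClosed_le continuous_const (continuous_apply z)).inter
    ((isClosed_iInter fun x => isClosed_eq ?_ continuous_const).inter
      (isClosed_iInter fun y => isClosed_eq ?_ continuous_const)) <;>
  exact continuous_finsetSum _ fun _ _ => continuous_apply _

lemma isCompact_setOf_isCoupling (α : X → ℝ) (β : Y → ℝ) :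
    IsCompact {μ : X × Y → ℝ | IsCoupling μ α β} :=
  (isCompact_univ_pi fun z => isCompact_Icc (a := 0) (b := α z.1)).of_isClosed_subset
    (isClosed_setOf_isCoupling α β) fun _ hμ z _ => ⟨hμ.1 z, hμ.le_left z⟩

lemma continuous_sum_mul (D : X × Y → ℝ) : Continuous fun μ : X × Y → ℝ => ∑ z, D z * μ z :=
  continuous_finsetSum _ fun z _ => continuous_const.mul (continuous_apply z)

lemma dW_le_of_isCoupling {μ : X × Y → ℝ} (hμ : IsCoupling μ α β) (D : X × Y → ℝ) :
    dW α β D ≤ ∑ z, D z * μ z := by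
  refine ciInf_le ?_ (⟨μ, hμ⟩ : {μ // IsCoupling μ α β})
  refine ((isCompact_setOf_isCoupling α β).image (continuous_sum_mul D)).bddBelow.mono ?_
  rintro _ ⟨μ', rfl⟩
  exact ⟨μ'.1, μ'.2, rfl⟩

lemma exists_isCoupling_sum_mul_eq_dW (hα : IsProb α) (hβ : IsProb β) (D : X × Y → ℝ) :
    ∃ μ, IsCoupling μ α β ∧ ∑ z, D z * μ z = dW α β D := by
  obtain ⟨μ, hμ, hmin⟩ := (isCompact_setOf_isCoupling α β).exists_isMinOn
    ⟨_, hα.isCoupling_prod hβ⟩ (continuous_sum_mul D).continuousOn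
  have : Nonempty {μ // IsCoupling μ α β} := ⟨⟨μ, hμ⟩⟩
  exact ⟨μ, hμ, le_antisymm (le_ciInf fun μ' => hmin μ'.2) (dW_le_of_isCoupling hμ D)⟩

end Coupling

section TruncatedGeometric

variable {δ : ℝ} {k t : ℕ}

lemma pTrunc_of_lt (h : k < t) : pTrunc δ k t = 0 := by
  simp [pTrunc, h.not_gt, h.ne']

lemma pTrunc_zero_zero : pTrunc δ 0 0 = 1 := by
  simp [pTrunc]

lemma pTrunc_succ_zero : pTrunc δ (k + 1) 0 = δ := by
  simp [pTrunc]

lemma pTrunc_succ_succ : pTrunc δ (k + 1) (t + 1) = (1 - δ) * pTrunc δ k t := by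
  unfold pTrunc
  rcases lt_trichotomy t k with h | rfl | h
  · simp only [add_lt_add_iff_right, h, if_true, pow_succ]; ring
  · simp only [lt_irrefl, if_false, if_true, pow_succ]; ring
  · simp only [add_lt_add_iff_right, h.not_gt, h.ne', add_left_inj, if_false, mul_zero]

lemma tsum_pTrunc_mul (g : ℕ → ℝ) :
    ∑' t, pTrunc δ k t * g t = ∑ t ∈ range (k + 1), pTrunc δ k t * g t :=
  tsum_eq_sum fun t ht => by
    rw [pTrunc_of_lt (by simpa [Nat.lt_succ_iff] using ht), zero_mul]

end TruncatedGeometric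

section HorizonCost

variable {X Y : Type*} [Fintype X] [Fintype Y]

lemma lawAux_succ' (ν : X × Y → ℝ) (m : ℕ → X × Y → X × Y → ℝ) (t : ℕ) (z : X × Y) :
    lawAux ν m (t + 1) z = ∑ w, lawAux (m 0 w) (fun s => m (s + 1)) t z * ν w := by
  induction t generalizing z with
  | zero => simp only [lawAux]
  | succ t ih =>
    show ∑ u, m (t + 1) u z * lawAux ν m (t + 1) u =
      ∑ w, (∑ u, m (t + 1) u z * lawAux (m 0 w) (fun s => m (s + 1)) t u) * ν w
    simp only [ih, mul_sum, sum_mul]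
    rw [sum_comm]
    exact sum_congr rfl fun _ _ => sum_congr rfl fun _ _ => by ring

noncomputable def horizonCost (C : X × Y → ℝ) (δ : ℝ) (k : ℕ) (ν : X × Y → ℝ)
    (m : ℕ → X × Y → X × Y → ℝ) : ℝ :=
  ∑ t ∈ range (k + 1), pTrunc δ k t * ∑ z, C z * lawAux ν m t z

variable (C : X × Y → ℝ) (δ : ℝ) (ν : X × Y → ℝ) (m : ℕ → X × Y → X × Y → ℝ)

lemma horizonCost_zero : horizonCost C δ 0 ν m = ∑ z, C z * ν z := by
  simp [horizonCost, lawAux, pTrunc_zero_zero]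

lemma horizonCost_succ (k : ℕ) :
    horizonCost C δ (k + 1) ν m = δ * ∑ z, C z * ν z +
      (1 - δ) * ∑ w, horizonCost C δ k (m 0 w) (fun s => m (s + 1)) * ν w := by
  have hstep : ∀ t, ∑ z, C z * lawAux ν m (t + 1) z =
      ∑ w, (∑ z, C z * lawAux (m 0 w) (fun s => m (s + 1)) t z) * ν w := fun t => by
    simp only [lawAux_succ', mul_sum, sum_mul]
    rw [sum_comm]
    exact sum_congr rfl fun _ _ => sum_congr rfl fun _ _ => by ring
  rw [horizonCost, sum_range_succ', add_comm]
  simp only [pTrunc_succ_zero, pTrunc_succ_succ, hstep]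
  congr 1
  simp only [horizonCost, mul_sum, sum_mul]
  rw [sum_comm]
  exact sum_congr rfl fun _ _ => sum_congr rfl fun _ _ => sum_congr rfl fun _ _ => by ring

end HorizonCost

section Recursion

variable {X Y : Type*} [Fintype X] [Fintype Y] (MX : MarkovChain X) (MY : MarkovChain Y)
  (C : X × Y → ℝ) (δ : ℝ)

lemma sum_Cmat_succ_mul (k : ℕ) (ν : X × Y → ℝ) :
    ∑ z, Cmat MX MY C δ (k + 1) z * ν z = δ * ∑ z, C z * ν z +
      (1 - δ) * ∑ w, dW (MX.kernel w.1) (MY.kernel w.2) (Cmat MX MY C δ k) * ν w := by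
  simp only [Cmat, mul_sum, ← sum_add_distrib]
  exact sum_congr rfl fun _ _ => by ring

lemma sum_Cmat_mul_le_horizonCost (hδ1 : δ ≤ 1) (k : ℕ) {ν : X × Y → ℝ} (hν : ∀ z, 0 ≤ ν z)
    {m : ℕ → X × Y → X × Y → ℝ}
    (hm : ∀ t w, IsCoupling (m t w) (MX.kernel w.1) (MY.kernel w.2)) :
    ∑ z, Cmat MX MY C δ k z * ν z ≤ horizonCost C δ k ν m := by
  induction k generalizing ν m with
  | zero => exact (horizonCost_zero C δ ν m).ge
  | succ k ih =>
    rw [sum_Cmat_succ_mul, horizonCost_succ]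
    gcongr with w
    · exact hν w
    calc dW (MX.kernel w.1) (MY.kernel w.2) (Cmat MX MY C δ k)
        ≤ ∑ z, Cmat MX MY C δ k z * m 0 w z := dW_le_of_isCoupling (hm 0 w) _
      _ ≤ _ := ih (hm 0 w).1 fun t => hm (t + 1)

lemma horizonCost_eq_sum_Cmat_mul {σ : ℕ → X × Y → X × Y → ℝ}
    (hσ : ∀ l w, ∑ z, Cmat MX MY C δ l z * σ l w z =
      dW (MX.kernel w.1) (MY.kernel w.2) (Cmat MX MY C δ l)) (k : ℕ) (ν : X × Y → ℝ) :
    horizonCost C δ k ν (fun t => σ (k - 1 - t)) = ∑ z, Cmat MX MY C δ k z * ν z := by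
  induction k generalizing ν with
  | zero => exact horizonCost_zero C δ ν _
  | succ k ih =>
    have hshift : (fun s => σ (k + 1 - 1 - (s + 1))) = fun s => σ (k - 1 - s) := by
      funext s; congr 1; omega
    rw [horizonCost_succ, sum_Cmat_succ_mul, hshift]
    simp only [ih, Nat.add_sub_cancel, Nat.sub_zero, hσ]

lemma dW_init_le_cost (hδ1 : δ ≤ 1) (k : ℕ) (π : MarkovCoupling MX MY) :
    dW MX.init MY.init (Cmat MX MY C δ k) ≤ ∑' t, pTrunc δ k t * ∑ z, C z * π.law t z :=
  (dW_le_of_isCoupling π.init_coupling _).trans <| (tsum_pTrunc_mul _).symm ▸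
    sum_Cmat_mul_le_horizonCost MX MY C δ hδ1 k π.init_coupling.1 π.trans_coupling

end Recursion

theorem stmt9_general {X Y : Type*} [Fintype X] [Fintype Y]
    (MX : MarkovChain X) (MY : MarkovChain Y)
    (C : X × Y → ℝ)
    (δ : ℝ) (hδ1 : δ ≤ 1) (k : ℕ) :
    dOTM (pTrunc δ k) MX MY C = dW MX.init MY.init (Cmat MX MY C δ k) := by
  choose σ hσ hσ_cost using fun l (w : X × Y) => exists_isCoupling_sum_mul_eq_dW
    (MX.kernel_prob w.1) (MY.kernel_prob w.2) (Cmat MX MY C δ l)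
  obtain ⟨μ, hμ, hμ_cost⟩ :=
    exists_isCoupling_sum_mul_eq_dW MX.init_prob MY.init_prob (Cmat MX MY C δ k)
  let π : MarkovCoupling MX MY := ⟨μ, fun t => σ (k - 1 - t), hμ, fun t => hσ _⟩
  have : Nonempty (MarkovCoupling MX MY) := ⟨π⟩
  have lower := dW_init_le_cost MX MY C δ hδ1 k
  refine le_antisymm ?_ (le_ciInf lower)
  calc dOTM (pTrunc δ k) MX MY C
      ≤ ∑' t, pTrunc δ k t * ∑ z, C z * π.law t z :=
        ciInf_le ⟨_, Set.forall_mem_range.2 lower⟩ π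
    _ = dW MX.init MY.init (Cmat MX MY C δ k) := by
        rw [tsum_pTrunc_mul, ← hμ_cost]
        exact horizonCost_eq_sum_Cmat_mul MX MY C δ hσ_cost k μ

/-- Recursive computation: the depth-`k` δ-discounted WL distance equals the
optimal transport cost between the initial distributions for the recursively
computed cost matrix `C^{δ,(k)}`. -/
theorem stmt9 {X Y : Type*} [Fintype X] [Fintype Y]
    (MX : MarkovChain X) (MY : MarkovChain Y)
    (C : X × Y → ℝ) (hC : ∀ z, 0 ≤ C z)
    (δ : ℝ) (hδ0 : 0 ≤ δ) (hδ1 : δ ≤ 1) (k : ℕ) :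
    dOTM (pTrunc δ k) MX MY C = dW MX.init MY.init (Cmat MX MY C δ k) :=
  stmt9_general MX MY C δ hδ1 k
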